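/- Let u : [0,R] → ℝ be continuously differentiable with u(0) = 0. Then for every r ∈ [0,R], |u(r)|² ≤ ∫₀ᴿ (∂ᵣu(s) + u(s)/s)² s ds, where the integrand is interpreted via the identity 2 u ∂ᵣu = (∂ᵣu + u/s)² s - (∂ᵣu)² s - (u/s)² s. In particular, ‖u‖_∞² ≤ ∫₀ᴿ (∂ᵣu(s) + u(s)/s)² s ds. -/

import Mathlib

open intervalIntegral

theorem radial_sup_bound (R : ℝ) (hR : 0 < R) (u : ℝ → ℝ)
    (hu : ContDiffOn ℝ 1 u (Set.Icc 0 R)) (hu0 : u 0 = 0) :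
    ∀ r ∈ Set.Icc 0 R,
      (u r) ^ 2 ≤ ∫ s in (0:ℝ)..R, (deriv u s + u s / s) ^ 2 * s := by
  intro r hr
  obtain ⟨hr0, hrR⟩ := hr
  set I := Set.Icc (0:ℝ) R with hI
  have hud : UniqueDiffOn ℝ I := uniqueDiffOn_Icc hR
  set f := derivWithin u I with hf
  have hfc : ContinuousOn f I := hu.continuousOn_derivWithin hud le_rfl
  have huc : ContinuousOn u I := hu.continuousOn
  have h0I : (0:ℝ) ∈ I := by simp [hI, hR.le]
  have hder : ∀ s ∈ I, HasDerivWithinAt u (f s) I s := fun s hs =>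
    ((hu.differentiableOn one_ne_zero) s hs).hasDerivWithinAt
  -- q s = u s / s, fixed at 0
  set q : ℝ → ℝ := fun s => if s = 0 then f 0 else u s / s with hq
  have hqc : ContinuousOn q I := by
    intro s hs
    rcases eq_or_ne s 0 with rfl | hs0
    · rw [← continuousWithinAt_diff_self]
      have h0 : HasDerivWithinAt u (f 0) I 0 := hder 0 h0I
      rw [hasDerivWithinAt_iff_tendsto_slope] at h0
      have hq0 : q 0 = f 0 := by simp [hq]
      rw [ContinuousWithinAt, hq0]
      refine h0.congr' ?_
      filter_upwards [eventually_mem_nhdsWithin] with x hx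
      have hx0 : x ≠ 0 := hx.2
      simp [slope_def_field, hu0, hq, hx0]
    · have hcc : ContinuousWithinAt (fun t => u t / t) I s :=
        (huc s hs).div continuousWithinAt_id hs0
      refine hcc.congr_of_eventuallyEq ?_ (by simp [hq, hs0])
      have : ∀ᶠ t in nhdsWithin s I, t ≠ 0 :=
        eventually_nhdsWithin_of_eventually_nhds
          (eventually_ne_nhds hs0)
      filter_upwards [this] with t ht
      simp [hq, ht]
  -- nice integrand
  set F : ℝ → ℝ := fun s => (f s + q s) ^ 2 * s with hF
  have hFc : ContinuousOn F I := by
    exact (((hfc.add hqc).pow 2).mul continuousOn_id)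
  have hFc_sub : ∀ a b : ℝ, 0 ≤ a → b ≤ R → a ≤ b →
      IntervalIntegrable F MeasureTheory.volume a b := by
    intro a b ha hb hab
    apply ContinuousOn.intervalIntegrable
    apply hFc.mono
    rw [Set.uIcc_of_le hab]
    exact Set.Icc_subset_Icc ha hb
  -- FTC : u r ^ 2 = ∫₀^r 2 u f
  set g : ℝ → ℝ := fun s => 2 * u s * f s with hg
  have hgc : ContinuousOn g I := by
    exact (continuousOn_const.mul huc).mul hfc
  have hsubIcc : Set.Icc (0:ℝ) r ⊆ I := Set.Icc_subset_Icc le_rfl hrR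
  have hgint : IntervalIntegrable g MeasureTheory.volume 0 r := by
    apply ContinuousOn.intervalIntegrable
    apply hgc.mono
    rwa [Set.uIcc_of_le hr0]
  have hFTC : ∫ s in (0:ℝ)..r, g s = u r ^ 2 - u 0 ^ 2 := by
    apply integral_eq_sub_of_hasDerivAt_of_le hr0
    · exact fun s hs => ((huc.mono hsubIcc) s hs).pow 2
    · intro x hx
      have hxI : x ∈ Set.Ioo (0:ℝ) R := ⟨hx.1, lt_of_lt_of_le hx.2 hrR⟩
      have hmem : I ∈ nhds x := Icc_mem_nhds hxI.1 hxI.2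
      have hdx : HasDerivAt u (f x) x := (hder x (Set.Ioo_subset_Icc_self hxI)).hasDerivAt hmem
      have := hdx.fun_pow 2
      simpa [hg, mul_comm, mul_assoc, mul_left_comm] using this
    · exact hgint
  -- pointwise : g ≤ F on [0, r]
  have hgF : ∀ s ∈ Set.Icc (0:ℝ) r, g s ≤ F s := by
    intro s hs
    rcases eq_or_lt_of_le hs.1 with rfl | hs0
    · simp [hg, hF, hu0]
    · have hsne : s ≠ 0 := ne_of_gt hs0
      have hqs : q s = u s / s := by simp [hq, hsne]
      have hexp : F s = f s ^ 2 * s + 2 * u s * f s + (u s) ^ 2 / s := by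
        rw [hF]; simp only [hqs]; field_simp; ring
      have h1 : 0 ≤ f s ^ 2 * s := mul_nonneg (sq_nonneg _) hs0.le
      have h2 : 0 ≤ (u s) ^ 2 / s := div_nonneg (sq_nonneg _) hs0.le
      rw [hexp, hg]; linarith
  have hFint1 : IntervalIntegrable F MeasureTheory.volume 0 r := hFc_sub 0 r le_rfl hrR hr0
  have hFint2 : IntervalIntegrable F MeasureTheory.volume r R := hFc_sub r R hr0 le_rfl hrR
  have step1 : ∫ s in (0:ℝ)..r, g s ≤ ∫ s in (0:ℝ)..r, F s :=
    integral_mono_on hr0 hgint hFint1 hgF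
  have step2 : ∫ s in (0:ℝ)..r, F s ≤ ∫ s in (0:ℝ)..R, F s := by
    rw [← integral_add_adjacent_intervals hFint1 hFint2]
    have : (0:ℝ) ≤ ∫ s in r..R, F s := by
      apply integral_nonneg hrR
      intro x hx
      exact mul_nonneg (sq_nonneg _) (le_trans hr0 hx.1)
    linarith
  -- ∫ F = ∫ original integrand
  have step3 : ∫ s in (0:ℝ)..R, F s = ∫ s in (0:ℝ)..R, (deriv u s + u s / s) ^ 2 * s := by
    apply integral_congr_ae
    have hae : ∀ᵐ x : ℝ, x ≠ R := by
      have hset : {x : ℝ | ¬ x ≠ R} = {R} := by ext x; simp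
      rw [MeasureTheory.ae_iff, hset]
      exact MeasureTheory.measure_singleton R
    filter_upwards [hae] with x hx hxmem
    rw [Set.uIoc_of_le hR.le] at hxmem
    have hxIoo : x ∈ Set.Ioo (0:ℝ) R := ⟨hxmem.1, lt_of_le_of_ne hxmem.2 hx⟩
    have hmem : I ∈ nhds x := Icc_mem_nhds hxIoo.1 hxIoo.2
    have hdw : f x = deriv u x := derivWithin_of_mem_nhds hmem
    have hqx : q x = u x / x := by simp [hq, ne_of_gt hxIoo.1]
    rw [hF]; simp only [hdw, hqx]
  calc (u r) ^ 2 = ∫ s in (0:ℝ)..r, g s := by rw [hFTC, hu0]; ring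
    _ ≤ ∫ s in (0:ℝ)..r, F s := step1
    _ ≤ ∫ s in (0:ℝ)..R, F s := step2
    _ = _ := step3
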